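/- arXiv:1108.5264 — 6 statements merged into one kernel-verified Lean document; each statement's English description precedes it below -/
import Mathlib

section
/- Let c be a d×d real correlation matrix (symmetric positive semidefinite with all diagonal entries equal to 1) and let e_i denote the matrix with a 1 in entry (i,i) and 0 elsewhere. Then the matrix c − c e_i c is symmetric positive semidefinite, and its i-th row and i-th column are zero. -/
/-!
With `E = single i i 1` we have `E * c * E = single i i (c i i)`, so when `c i i = 1` the matrix
`c - c * E * c` factors as `(1 - E * c)ᴴ * c * (1 - E * c)`, a congruence of `c`.
-/

open Matrix

namespace Matrix

variable {n R : Type*} [Fintype n] [DecidableEq n]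

theorem mul_single_mul_apply [NonUnitalNonAssocSemiring R] (A B : Matrix n n R)
    (i j k l : n) (a : R) : (A * single i j a * B) k l = A k i * a * B j l := by
  simp [mul_apply, single, ite_and]

theorem sub_mul_single_mul_eq_conjTranspose_mul_mul [Ring R] [StarRing R] {c : Matrix n n R}
    (hc : c.IsHermitian) {i : n} (hii : c i i = 1) :
    c - c * single i i 1 * c = (1 - single i i 1 * c)ᴴ * c * (1 - single i i 1 * c) := by
  have hE : single i i (1 : R) * c * single i i 1 = single i i 1 := by
    rw [single_mul_mul_single, hii, one_mul, one_mul]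
  rw [conjTranspose_sub, conjTranspose_one, conjTranspose_mul, conjTranspose_single, star_one,
    hc.eq]
  calc c - c * single i i 1 * c
      = c - c * single i i 1 * c - c * single i i 1 * c
          + c * (single i i 1 * c * single i i 1) * c := by
        rw [hE]; abel
    _ = (1 - c * single i i 1) * c * (1 - single i i 1 * c) := by
        simp only [sub_mul, mul_sub, one_mul, mul_one, Matrix.mul_assoc]; abel

theorem PosSemidef.sub_mul_single_mul [Ring R] [PartialOrder R] [StarRing R]
    {c : Matrix n n R} (hc : c.PosSemidef) {i : n} (hii : c i i = 1) :
    (c - c * single i i 1 * c).PosSemidef := by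
  rw [sub_mul_single_mul_eq_conjTranspose_mul_mul hc.isHermitian hii]
  exact hc.conjTranspose_mul_mul_same _

end Matrix

/-- For a correlation matrix `c` (symmetric PSD with unit diagonal), the matrix
`c - c e_i c` is PSD and its `i`-th row and column vanish. -/
theorem stmt0 (d : ℕ) (c : Matrix (Fin d) (Fin d) ℝ)
    (hc : c.PosSemidef) (hdiag : ∀ i, c i i = 1) (i : Fin d) :
    (c - c * Matrix.single i i 1 * c).PosSemidef ∧
    (∀ j, ((c - c * Matrix.single i i 1 * c) : Matrix (Fin d) (Fin d) ℝ) i j = 0) ∧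
    (∀ j, ((c - c * Matrix.single i i 1 * c) : Matrix (Fin d) (Fin d) ℝ) j i = 0) :=
  ⟨hc.sub_mul_single_mul (hdiag i), fun j => by simp [mul_single_mul_apply, hdiag],
    fun j => by simp [mul_single_mul_apply, hdiag]⟩
end

section
/- Let c be a d×d correlation matrix, √c its positive semidefinite square root, and 1 ≤ n ≤ d. Then I_d − √c e_n √c is symmetric positive semidefinite and is idempotent, i.e. (I_d − √c e_n √c)² = I_d − √c e_n √c; equivalently its PSD square root equals itself. -/
/-!
Write `E = e_n` and `P = √c E √c`. Since `√c √c = c` and `E c E = c_nn E = E` (unit diagonal),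
`P² = √c (E c E) √c = P`; so `P`, and with it `I - P`, is a symmetric idempotent, and a
symmetric idempotent `Q` is positive semidefinite because `Q = Qᴴ Q`.
-/

open Matrix

section

open scoped ComplexOrder

/-- The positive semidefinite square root of a positive semidefinite matrix (the definition
of `Matrix.PosSemidef.sqrt` in the older Mathlib, which has since been removed). -/
noncomputable def Matrix.PosSemidef.sqrt {n : Type*} [Fintype n] [DecidableEq n] {𝕜 : Type*}
    [RCLike 𝕜] {A : Matrix n n 𝕜} (hA : A.PosSemidef) : Matrix n n 𝕜 :=
  hA.1.eigenvectorUnitary.1 * diagonal ((↑) ∘ (√·) ∘ hA.1.eigenvalues) *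
  (star hA.1.eigenvectorUnitary : Matrix n n 𝕜)

end

theorem IsIdempotentElem.mul_mul_of_mul_mul_self_mul {R : Type*} [Semigroup R] {s e : R}
    (h : e * (s * s) * e = e) : IsIdempotentElem (s * e * s) := by
  calc s * e * s * (s * e * s) = s * (e * (s * s) * e) * s := by simp only [mul_assoc]
    _ = s * e * s := by rw [h]

theorem Matrix.IsHermitian.posSemidef_of_isIdempotentElem {m R : Type*} [Fintype m]
    [CommRing R] [PartialOrder R] [StarRing R] [StarOrderedRing R] {A : Matrix m m R}
    (hA : A.IsHermitian) (hA' : IsIdempotentElem A) : A.PosSemidef := by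
  simpa only [hA.eq, hA'.eq] using posSemidef_conjTranspose_mul_self A

namespace Matrix.PosSemidef

open scoped ComplexOrder

variable {n 𝕜 : Type*} [Fintype n] [DecidableEq n] [RCLike 𝕜] {A : Matrix n n 𝕜}

theorem isHermitian_sqrt (hA : A.PosSemidef) : hA.sqrt.IsHermitian := by
  simp only [IsHermitian, sqrt, conjTranspose_mul, star_eq_conjTranspose,
    conjTranspose_conjTranspose, diagonal_conjTranspose, mul_assoc]
  congr 3
  funext i
  simp

theorem sqrt_mul_self (hA : A.PosSemidef) : hA.sqrt * hA.sqrt = A := by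
  set U : Matrix n n 𝕜 := hA.1.eigenvectorUnitary.1
  set D : Matrix n n 𝕜 := diagonal ((↑) ∘ (√·) ∘ hA.1.eigenvalues)
  have hU : (star hA.1.eigenvectorUnitary : Matrix n n 𝕜) * U = 1 :=
    Unitary.coe_star_mul_self _
  have hD : D * D = diagonal (RCLike.ofReal ∘ hA.1.eigenvalues) := by
    rw [diagonal_mul_diagonal]
    congr 1
    funext i
    simp [← RCLike.ofReal_mul, Real.mul_self_sqrt (hA.eigenvalues_nonneg i)]
  conv_rhs => rw [hA.1.spectral_theorem, Unitary.conjStarAlgAut_apply]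
  calc hA.sqrt * hA.sqrt
      = U * (D * ((star hA.1.eigenvectorUnitary : Matrix n n 𝕜) * U) * D) *
          (star hA.1.eigenvectorUnitary : Matrix n n 𝕜) := by
        simp only [sqrt, mul_assoc]; rfl
    _ = _ := by rw [hU, mul_one, hD]

end Matrix.PosSemidef

/-- For a correlation matrix `c`, the matrix `I - √c e_n √c` is symmetric positive
semidefinite and idempotent (hence equal to its own PSD square root). -/
theorem stmt3 (d : ℕ) (c : Matrix (Fin d) (Fin d) ℝ) (hc : c.PosSemidef)
    (hdiag : ∀ i, c i i = 1) (n : Fin d) :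
    ((1 : Matrix (Fin d) (Fin d) ℝ) - hc.sqrt * Matrix.single n n 1 * hc.sqrt).PosSemidef ∧
    ((1 : Matrix (Fin d) (Fin d) ℝ) - hc.sqrt * Matrix.single n n 1 * hc.sqrt) *
        ((1 : Matrix (Fin d) (Fin d) ℝ) - hc.sqrt * Matrix.single n n 1 * hc.sqrt)
      = (1 : Matrix (Fin d) (Fin d) ℝ) - hc.sqrt * Matrix.single n n 1 * hc.sqrt := by
  have hsqrt := hc.isHermitian_sqrt
  have hP : IsIdempotentElem (hc.sqrt * single n n 1 * hc.sqrt) :=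
    .mul_mul_of_mul_mul_self_mul <| by
      rw [hc.sqrt_mul_self, single_mul_mul_single, hdiag, mul_one, mul_one]
  have hPH : (hc.sqrt * single n n (1 : ℝ) * hc.sqrt).IsHermitian := by
    simpa only [hsqrt.eq] using
      isHermitian_mul_mul_conjTranspose hc.sqrt (A := single n n 1)
        (by simp only [IsHermitian, conjTranspose_single, star_one])
  exact ⟨(isHermitian_one.sub hPH).posSemidef_of_isIdempotentElem hP.one_sub, hP.one_sub⟩
end

section
/- Let κ = diag(κ_1,...,κ_d) with κ_i ≥ 0 and let c be a d×d correlation matrix such that κc + cκ is positive semidefinite. Then for every initial condition x ∈ C_d(R), the solution of the linear ODE x'(t) = κ(c − x(t)) + (c − x(t))κ remains in the set of correlation matrices for all t ≥ 0. -/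
open Matrix

/-- A correlation matrix: symmetric positive semidefinite with unit diagonal. -/
def IsCorrelation {d : ℕ} (x : Matrix (Fin d) (Fin d) ℝ) : Prop :=
  x.PosSemidef ∧ ∀ i, x i i = 1

/-!
With `E t = diag(exp(κᵢ t))`, each entry of the ODE is the scalar equation
`y' = (κᵢ + κⱼ)(cᵢⱼ - y)`, so `E t (x t - c) E t = x 0 - c`, i.e.
`E t (x t) E t = x 0 + (E t c E t - c)`. The quadratic form `s ↦ vᵀ E s c E s v` has derivative
`(E s v)ᵀ (κc + cκ) (E s v) ≥ 0`, so `E t c E t - c` is PSD for `t ≥ 0`; hence `x t` is a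
congruence of a sum of two PSD matrices. The diagonal stays `1` because `cᵢᵢ = x 0 ᵢᵢ = 1`.
-/

lemma exp_mul_sub_eq_of_hasDerivAt {a b : ℝ} {y : ℝ → ℝ}
    (hy : ∀ t, HasDerivAt y (a * (b - y t)) t) (t : ℝ) :
    Real.exp (a * t) * (y t - b) = y 0 - b := by
  have hderiv (s : ℝ) : HasDerivAt (fun s => Real.exp (a * s) * (y s - b)) 0 s :=
    ((((hasDerivAt_id s).const_mul a).exp).mul ((hy s).sub_const b)).congr_deriv (by simp; ring)
  simpa using is_const_of_deriv_eq_zero (fun s => (hderiv s).differentiableAt)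
    (fun s => (hderiv s).deriv) t 0

section ExpDiagonal

variable {n : Type*} [DecidableEq n]

noncomputable def expDiagonal (k : n → ℝ) (t : ℝ) : Matrix n n ℝ :=
  diagonal fun i => Real.exp (k i * t)

variable (k : n → ℝ)

@[simp]
lemma conjTranspose_expDiagonal (t : ℝ) : (expDiagonal k t)ᴴ = expDiagonal k t := by
  simp [expDiagonal]

variable [Fintype n]

lemma expDiagonal_mul_mul_expDiagonal_apply (t : ℝ) (A : Matrix n n ℝ) (i j : n) :
    (expDiagonal k t * A * expDiagonal k t) i j = Real.exp ((k i + k j) * t) * A i j := by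
  simp only [expDiagonal, diagonal_mul, mul_diagonal, add_mul, Real.exp_add]
  ring

lemma expDiagonal_mulVec (t : ℝ) (v : n → ℝ) :
    expDiagonal k t *ᵥ v = fun i => Real.exp (k i * t) * v i := by
  ext i
  exact mulVec_diagonal _ _ i

lemma expDiagonal_neg_mul_expDiagonal (t : ℝ) :
    expDiagonal k (-t) * expDiagonal k t = 1 := by
  simp [expDiagonal, ← Real.exp_add, diagonal_one]

lemma expDiagonal_mul_expDiagonal_neg (t : ℝ) :
    expDiagonal k t * expDiagonal k (-t) = 1 := by
  simpa using expDiagonal_neg_mul_expDiagonal k (-t)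

lemma expDiagonal_neg_mul_mul_expDiagonal_neg (t : ℝ) (A : Matrix n n ℝ) :
    expDiagonal k (-t) * (expDiagonal k t * A * expDiagonal k t) * expDiagonal k (-t) = A := by
  simp only [Matrix.mul_assoc, expDiagonal_mul_expDiagonal_neg, Matrix.mul_one]
  rw [← Matrix.mul_assoc, expDiagonal_neg_mul_expDiagonal, Matrix.one_mul]

lemma hasDerivAt_dotProduct_expDiagonal_conj_mulVec (c : Matrix n n ℝ) (v : n → ℝ) (s : ℝ) :
    HasDerivAt (fun s => v ⬝ᵥ (expDiagonal k s * c * expDiagonal k s) *ᵥ v)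
      ((expDiagonal k s *ᵥ v) ⬝ᵥ
        (diagonal k * c + c * diagonal k) *ᵥ (expDiagonal k s *ᵥ v)) s := by
  have hsum := HasDerivAt.fun_sum (u := Finset.univ) fun i _ => (HasDerivAt.fun_sum
    (u := Finset.univ) fun j _ => ((((hasDerivAt_id s).const_mul (k i + k j)).exp).mul_const
      (c i j)).mul_const (v j)).const_mul (v i)
  have hfun : (fun s => v ⬝ᵥ (expDiagonal k s * c * expDiagonal k s) *ᵥ v) =
      fun s => ∑ i, v i * ∑ j, Real.exp ((k i + k j) * s) * c i j * v j := by
    ext s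
    simp only [dotProduct, mulVec, expDiagonal_mul_mul_expDiagonal_apply]
  rw [hfun]
  refine hsum.congr_deriv ?_
  rw [expDiagonal_mulVec]
  simp only [dotProduct, mulVec, Matrix.add_apply, diagonal_mul, mul_diagonal, Finset.mul_sum,
    add_mul, Real.exp_add, id]
  refine Finset.sum_congr rfl fun i _ => Finset.sum_congr rfl fun j _ => ?_
  ring

lemma posSemidef_expDiagonal_mul_mul_expDiagonal_sub {c : Matrix n n ℝ} (hc : c.IsHermitian)
    (hpsd : (diagonal k * c + c * diagonal k).PosSemidef) {t : ℝ} (ht : 0 ≤ t) :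
    (expDiagonal k t * c * expDiagonal k t - c).PosSemidef := by
  have hherm : (expDiagonal k t * c * expDiagonal k t).IsHermitian := by
    simpa only [conjTranspose_expDiagonal] using
      isHermitian_conjTranspose_mul_mul (expDiagonal k t) hc
  refine PosSemidef.of_dotProduct_mulVec_nonneg (hherm.sub hc) fun v => ?_
  have hmono : Monotone fun s => v ⬝ᵥ (expDiagonal k s * c * expDiagonal k s) *ᵥ v := by
    refine monotone_of_deriv_nonneg
      (fun s => (hasDerivAt_dotProduct_expDiagonal_conj_mulVec k c v s).differentiableAt)
      fun s => ?_
    rw [(hasDerivAt_dotProduct_expDiagonal_conj_mulVec k c v s).deriv]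
    simpa using hpsd.dotProduct_mulVec_nonneg (expDiagonal k s *ᵥ v)
  have h0 : expDiagonal k 0 * c * expDiagonal k 0 = c := by
    simp [expDiagonal, diagonal_one]
  simpa [sub_mulVec, h0] using hmono ht

lemma expDiagonal_mul_sub_mul_expDiagonal_of_hasDerivAt {c : Matrix n n ℝ}
    {x : ℝ → Matrix n n ℝ} (hode : ∀ (t : ℝ) (i j : n), HasDerivAt (fun s => x s i j)
      ((diagonal k * (c - x t) + (c - x t) * diagonal k) i j) t) (t : ℝ) :
    expDiagonal k t * (x t - c) * expDiagonal k t = x 0 - c := by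
  ext i j
  rw [expDiagonal_mul_mul_expDiagonal_apply]
  refine exp_mul_sub_eq_of_hasDerivAt (fun s => (hode s i j).congr_deriv ?_) t
  simp only [Matrix.add_apply, diagonal_mul, mul_diagonal, Matrix.sub_apply]
  ring

end ExpDiagonal

theorem stmt9_general (d : ℕ) (k : Fin d → ℝ)
    (c : Matrix (Fin d) (Fin d) ℝ) (hc : IsCorrelation c)
    (hpsd : (Matrix.diagonal k * c + c * Matrix.diagonal k).PosSemidef)
    (x : ℝ → Matrix (Fin d) (Fin d) ℝ) (hx0 : IsCorrelation (x 0))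
    (hode : ∀ (t : ℝ) (i j : Fin d), HasDerivAt (fun s => x s i j)
      ((Matrix.diagonal k * (c - x t) + (c - x t) * Matrix.diagonal k) i j) t) :
    ∀ t ≥ (0 : ℝ), IsCorrelation (x t) := by
  intro t ht
  have hsol := expDiagonal_mul_sub_mul_expDiagonal_of_hasDerivAt k hode t
  have hconj : expDiagonal k t * x t * expDiagonal k t =
      x 0 + (expDiagonal k t * c * expDiagonal k t - c) := by
    rw [← sub_add_cancel (expDiagonal k t * x t * expDiagonal k t)
      (expDiagonal k t * c * expDiagonal k t), ← Matrix.sub_mul, ← Matrix.mul_sub, hsol]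
    abel
  constructor
  · rw [← expDiagonal_neg_mul_mul_expDiagonal_neg k t (x t), hconj]
    simpa only [conjTranspose_expDiagonal] using
      (hx0.1.add (posSemidef_expDiagonal_mul_mul_expDiagonal_sub k hc.1.1 hpsd ht)
        ).mul_mul_conjTranspose_same (expDiagonal k (-t))
  · intro i
    have hii := congrFun₂ hsol i i
    rw [expDiagonal_mul_mul_expDiagonal_apply, Matrix.sub_apply, Matrix.sub_apply, hc.2 i,
      hx0.2 i, sub_self] at hii
    simpa [sub_eq_zero, Real.exp_ne_zero] using hii

/-- If `κ = diag(κᵢ)` is nonnegative diagonal, `c` is a correlation matrix and `κc + cκ` is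
PSD, then any solution of `x' = κ(c - x) + (c - x)κ` starting from a correlation matrix stays
in the set of correlation matrices for all `t ≥ 0`. -/
theorem stmt9 (d : ℕ) (k : Fin d → ℝ) (hk : ∀ i, 0 ≤ k i)
    (c : Matrix (Fin d) (Fin d) ℝ) (hc : IsCorrelation c)
    (hpsd : (Matrix.diagonal k * c + c * Matrix.diagonal k).PosSemidef)
    (x : ℝ → Matrix (Fin d) (Fin d) ℝ) (hx0 : IsCorrelation (x 0))
    (hode : ∀ (t : ℝ) (i j : Fin d), HasDerivAt (fun s => x s i j)
      ((Matrix.diagonal k * (c - x t) + (c - x t) * Matrix.diagonal k) i j) t) :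
    ∀ t ≥ (0 : ℝ), IsCorrelation (x t) :=
  stmt9_general d k c hc hpsd x hx0 hode
end

section
/- Let b be a d×d real symmetric matrix and κ a d×d real matrix such that the linear ODE x'(t) = b − (κ x(t) + x(t) κ^T) maps every initial correlation matrix to a curve of correlation matrices for all t ≥ 0. Then κ is necessarily diagonal, κ_i + κ_j ≥ 0 for all i ≠ j, and there exists a correlation matrix c with b = κc + cκ. -/
open Matrix

/-!
Along a solution started at a correlation matrix the diagonal is constant, so its derivative
at `t = 0` vanishes. For the starts `v vᵀ`, `v` a sign vector, this reads
`b i i = 2 v i (κ v) i`; comparing `v = 1` with `v` flipped at `j` gives `κ i j = 0`. With `κ`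
diagonal, each off-diagonal entry solves `y' = b i j - (κ i i + κ j j) y` and stays in `[-1, 1]`.
If `κ i i + κ j j < 0` this forces `y 0 = b i j / (κ i i + κ j j)`, which cannot hold both for the
start `1` (where `y 0 = 0`) and the all-ones start (where `y 0 = 1`). Otherwise the solution from
the identity converges to the equilibrium `c` of the equation, which is a correlation matrix
because that set is closed.
-/

open Filter Topology

theorem HasDerivAt.eq_zero_of_eqOn_Ici {f : ℝ → ℝ} {f' a : ℝ} (hf : HasDerivAt f f' a)
    (hc : Set.EqOn f (fun _ => f a) (Set.Ici a)) : f' = 0 := by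
  have hu : UniqueDiffWithinAt ℝ (Set.Ici a) a := uniqueDiffOn_Ici a a Set.self_mem_Ici
  have hconst : HasDerivWithinAt (fun _ => f a) f' (Set.Ici a) a :=
    hf.hasDerivWithinAt.congr (fun t ht => (hc ht).symm) rfl
  exact hu.eq_deriv _ hconst (hasDerivWithinAt_const _ _ _)

section ScalarODE

open Real

variable {f : ℝ → ℝ} {β r : ℝ}

theorem eq_div_add_mul_exp_of_forall_hasDerivAt (hr : r ≠ 0)
    (hf : ∀ t, HasDerivAt f (β - r * f t) t) (t : ℝ) :
    f t = β / r + (f 0 - β / r) * exp (-(r * t)) := by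
  have hg : ∀ s, HasDerivAt (fun s => (f s - β / r) * exp (r * s)) 0 s := fun s =>
    (((hf s).sub_const (β / r)).fun_mul ((hasDerivAt_id' s).const_mul r).exp).congr_deriv
      (by field_simp; ring)
  have h :=
    is_const_of_deriv_eq_zero (fun s => (hg s).differentiableAt) (fun s => (hg s).deriv) t 0
  rw [mul_zero, exp_zero, mul_one] at h
  rw [Real.exp_neg, ← h]
  field_simp
  ring

theorem eq_add_mul_of_forall_hasDerivAt (hf : ∀ t, HasDerivAt f β t) (t : ℝ) :
    f t = f 0 + β * t := by
  have hg : ∀ s, HasDerivAt (fun s => f s - β * s) 0 s := fun s => by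
    simpa using (hf s).fun_sub ((hasDerivAt_id s).const_mul β)
  have h :=
    is_const_of_deriv_eq_zero (fun s => (hg s).differentiableAt) (fun s => (hg s).deriv) t 0
  linarith

theorem eq_zero_of_eventually_abs_mul_add_le {g : ℝ → ℝ} (hg : Tendsto g atTop atTop)
    {a c C : ℝ} (h : ∀ᶠ t in atTop, |a * g t + c| ≤ C) : a = 0 := by
  by_contra ha
  have hlarge : Tendsto (fun t => |a| * g t - |c|) atTop atTop :=
    tendsto_atTop_add_const_right _ _ (hg.const_mul_atTop (abs_pos.2 ha))
  obtain ⟨t, hbound, hgt⟩ := (h.and (hlarge.eventually_gt_atTop C)).exists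
  have hle : |a| * g t ≤ |a * g t| := by
    rw [abs_mul]
    exact mul_le_mul_of_nonneg_left (le_abs_self _) (abs_nonneg a)
  linarith [abs_sub_abs_le_abs_add (a * g t) c]

theorem eq_div_of_forall_hasDerivAt_of_eventually_abs_le (hr : r < 0)
    (hf : ∀ t, HasDerivAt f (β - r * f t) t) {C : ℝ} (hb : ∀ᶠ t in atTop, |f t| ≤ C) :
    f 0 = β / r := by
  have hexp : Tendsto (fun t => exp (-(r * t))) atTop atTop := by
    simpa only [neg_mul_eq_neg_mul, Function.comp_def, id] using
      tendsto_exp_atTop.comp (tendsto_id.const_mul_atTop (neg_pos.2 hr))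
  have h := eq_zero_of_eventually_abs_mul_add_le hexp (a := f 0 - β / r) (c := β / r)
    (hb.mono fun t ht => by rwa [eq_div_add_mul_exp_of_forall_hasDerivAt hr.ne hf, add_comm] at ht)
  linarith

theorem eq_zero_of_forall_hasDerivAt_of_eventually_abs_le (hf : ∀ t, HasDerivAt f β t) {C : ℝ}
    (hb : ∀ᶠ t in atTop, |f t| ≤ C) : β = 0 :=
  eq_zero_of_eventually_abs_mul_add_le tendsto_id (c := f 0)
    (hb.mono fun t ht => by rwa [eq_add_mul_of_forall_hasDerivAt hf, add_comm] at ht)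

theorem tendsto_div_of_forall_hasDerivAt (hr : 0 < r) (hf : ∀ t, HasDerivAt f (β - r * f t) t) :
    Tendsto f atTop (𝓝 (β / r)) := by
  have hexp : Tendsto (fun t => exp (-(r * t))) atTop (𝓝 0) :=
    tendsto_exp_neg_atTop_nhds_zero.comp (tendsto_id.const_mul_atTop hr)
  have hlim := (hexp.const_mul (f 0 - β / r)).const_add (β / r)
  rw [mul_zero, add_zero] at hlim
  exact hlim.congr fun t => (eq_div_add_mul_exp_of_forall_hasDerivAt hr.ne' hf t).symm

end ScalarODE

namespace Matrix

variable {n : Type*} [Fintype n]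

theorem PosSemidef.two_mul_abs_apply_le {A : Matrix n n ℝ} (hA : A.PosSemidef) (i j : n) :
    2 * |A i j| ≤ A i i + A j j := by
  classical
  have hsymm : A j i = A i j := by simpa using congrFun (congrFun hA.isHermitian i) j
  have hplus := hA.dotProduct_mulVec_nonneg (Pi.single i 1 + Pi.single j 1)
  have hminus := hA.dotProduct_mulVec_nonneg (Pi.single i 1 - Pi.single j 1)
  simp only [star_trivial, mulVec_add, mulVec_sub, mulVec_single, dotProduct_add, dotProduct_sub,
    add_dotProduct, sub_dotProduct, single_dotProduct, one_mul, MulOpposite.op_one, one_smul,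
    col_apply, hsymm] at hplus hminus
  rw [← abs_two, ← abs_mul, abs_le]
  constructor <;> linarith

theorem IsDiag.mul_add_mul_apply {κ : Matrix n n ℝ} (hκ : κ.IsDiag) (x : Matrix n n ℝ)
    (i j : n) : (κ * x + x * κ) i j = (κ i i + κ j j) * x i j := by
  classical
  conv_lhs => rw [← hκ.diagonal_diag]
  rw [add_apply, diagonal_mul, mul_diagonal, diag_apply, diag_apply]
  ring

theorem vecMulVec_self_mul_add_mul_transpose_apply_self (κ : Matrix n n ℝ) (v : n → ℝ) (i : n) :
    (κ * vecMulVec v v + vecMulVec v v * κᵀ) i i = 2 * v i * (κ *ᵥ v) i := by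
  rw [add_apply, mul_vecMulVec, vecMulVec_mul, vecMul_transpose, vecMulVec_apply, vecMulVec_apply]
  ring

end Matrix

section Correlation

variable {d : ℕ}

theorem IsCorrelation.abs_apply_le_one {x : Matrix (Fin d) (Fin d) ℝ} (hx : IsCorrelation x)
    (i j : Fin d) : |x i j| ≤ 1 := by
  have := hx.1.two_mul_abs_apply_le i j
  rw [hx.2, hx.2] at this
  linarith

theorem isCorrelation_one : IsCorrelation (1 : Matrix (Fin d) (Fin d) ℝ) :=
  ⟨PosSemidef.one, one_apply_eq⟩

theorem isCorrelation_vecMulVec {v : Fin d → ℝ} (hv : ∀ k, |v k| = 1) :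
    IsCorrelation (vecMulVec v v) :=
  ⟨by simpa using posSemidef_vecMulVec_self_star v, fun k => by
    rw [vecMulVec_apply, ← abs_mul_abs_self, hv, one_mul]⟩

theorem isClosed_setOf_isCorrelation :
    IsClosed {x : Matrix (Fin d) (Fin d) ℝ | IsCorrelation x} := by
  simp only [IsCorrelation, posSemidef_iff_dotProduct_mulVec, IsHermitian, Set.ofPred_and,
    Set.ofPred_forall]
  refine ((isClosed_eq ?_ continuous_id).inter (isClosed_iInter fun y => isClosed_le ?_ ?_)).inter
    (isClosed_iInter fun i => isClosed_eq ?_ continuous_const)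
  all_goals fun_prop

end Correlation

open NormedSpace in
theorem exists_hasDerivAt_eq_sub_apply {E : Type*} [NormedAddCommGroup E] [NormedSpace ℝ E]
    [CompleteSpace E] (L : E →L[ℝ] E) (b x₀ : E) :
    ∃ x : ℝ → E, x 0 = x₀ ∧ ∀ t, HasDerivAt x (b - L (x t)) t := by
  -- `exp_add_of_commute` is stated for normed `ℚ`-algebras.
  let +nondep : NormedAlgebra ℚ (E →L[ℝ] E) := .restrictScalars ℚ ℝ _
  have hU : Continuous fun t : ℝ => exp (t • L) := by fun_prop
  have hQ : ∀ t, HasDerivAt (fun t => x₀ + ∫ s in 0..t, exp (s • L) b) (exp (t • L) b) t :=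
    fun t => ((hU.clm_apply continuous_const).integral_hasStrictDerivAt 0 t).hasDerivAt.const_add x₀
  have hexp : ∀ t : ℝ, exp (t • -L) (exp (t • L) b) = b := fun t => by
    have h := exp_add_of_commute (Commute.refl (t • L)).neg_left
    rw [neg_add_cancel, exp_zero] at h
    rw [smul_neg, ← mul_apply_eq_comp, ← h, one_apply_eq_self]
  refine ⟨fun t => exp (t • -L) (x₀ + ∫ s in 0..t, exp (s • L) b), by simp, fun t => ?_⟩
  convert (hasDerivAt_exp_smul_const' (-L) t).clm_apply (hQ t) using 1
  rw [hexp, mul_apply_eq_comp, _root_.neg_apply]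
  abel

namespace CorrelationODE

section

variable {n : Type*} [Fintype n] {b κ : Matrix n n ℝ}

def IsSolution (b κ : Matrix n n ℝ) (x : ℝ → Matrix n n ℝ) : Prop :=
  ∀ (t : ℝ) (i j : n), HasDerivAt (fun s => x s i j) ((b - (κ * x t + x t * κᵀ)) i j) t

section
attribute [local instance] Matrix.normedAddCommGroup Matrix.normedSpace

theorem exists_isSolution (b κ x₀ : Matrix n n ℝ) : ∃ x, x 0 = x₀ ∧ IsSolution b κ x := by
  let L : Matrix n n ℝ →L[ℝ] Matrix n n ℝ :=
    (LinearMap.mulLeft ℝ κ + LinearMap.mulRight ℝ κᵀ).toContinuousLinearMap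
  obtain ⟨x, hx0, hx⟩ := exists_hasDerivAt_eq_sub_apply L b x₀
  exact ⟨x, hx0, fun t i j => hasDerivAt_pi.1 (hasDerivAt_pi.1 (hx t) i) j⟩

end

theorem IsSolution.hasDerivAt_apply_of_isDiag {x : ℝ → Matrix n n ℝ} (hx : IsSolution b κ x)
    (hκ : κ.IsDiag) (i j : n) (t : ℝ) :
    HasDerivAt (fun s => x s i j) (b i j - (κ i i + κ j j) * x t i j) t := by
  simpa only [hκ.isSymm.eq, Matrix.sub_apply, hκ.mul_add_mul_apply] using hx t i j

end

variable {d : ℕ} {b κ : Matrix (Fin d) (Fin d) ℝ}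

def PreservesCorrelation (b κ : Matrix (Fin d) (Fin d) ℝ) : Prop :=
  ∀ x, IsCorrelation (x 0) → IsSolution b κ x → ∀ t ≥ (0 : ℝ), IsCorrelation (x t)

/-- Where `κ i i + κ j j = 0` the entry is the junk value `b i j / 0 = 0`; under
`PreservesCorrelation` that is harmless, because then `b i j = 0` as well. -/
noncomputable def equilibrium (b κ : Matrix (Fin d) (Fin d) ℝ) : Matrix (Fin d) (Fin d) ℝ :=
  of fun i j => if i = j then 1 else b i j / (κ i i + κ j j)

namespace PreservesCorrelation

variable {i j : Fin d} (hpres : PreservesCorrelation b κ)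
include hpres

theorem exists_solution {x₀ : Matrix (Fin d) (Fin d) ℝ} (hx₀ : IsCorrelation x₀) :
    ∃ x, x 0 = x₀ ∧ IsSolution b κ x ∧ ∀ t ≥ (0 : ℝ), IsCorrelation (x t) := by
  obtain ⟨x, hx0, hx⟩ := exists_isSolution b κ x₀
  exact ⟨x, hx0, hx, hpres x (hx0 ▸ hx₀) hx⟩

theorem apply_self_eq {x₀ : Matrix (Fin d) (Fin d) ℝ} (hx₀ : IsCorrelation x₀) (i : Fin d) :
    (κ * x₀ + x₀ * κᵀ) i i = b i i := by
  obtain ⟨x, rfl, hx, hcorr⟩ := hpres.exists_solution hx₀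
  have h := (hx 0 i i).eq_zero_of_eqOn_Ici fun t ht =>
    ((hcorr t ht).2 i).trans ((hcorr 0 le_rfl).2 i).symm
  rw [Matrix.sub_apply, sub_eq_zero] at h
  exact h.symm

theorem isDiag : κ.IsDiag := by
  intro i j hij
  let v : Fin d → ℝ := 1 - Pi.single j 2
  have hv : ∀ k, |v k| = 1 := fun k => by
    by_cases hk : k = j <;> norm_num [v, hk]
  have h1 := hpres.apply_self_eq (isCorrelation_vecMulVec (v := 1) fun _ => abs_one) i
  have h2 := hpres.apply_self_eq (isCorrelation_vecMulVec hv) i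
  rw [vecMulVec_self_mul_add_mul_transpose_apply_self] at h1 h2
  simp only [v, Pi.one_apply, mul_one, Pi.sub_apply, ne_eq, hij, not_false_eq_true,
    Pi.single_eq_of_ne, sub_zero, mulVec_sub, mulVec_single, MulOpposite.op_ofNat, Pi.smul_apply,
    col_apply, MulOpposite.smul_eq_mul_unop, MulOpposite.unop_ofNat] at h1 h2
  linarith

theorem apply_eq_div_of_neg (hneg : κ i i + κ j j < 0) {x₀ : Matrix (Fin d) (Fin d) ℝ}
    (hx₀ : IsCorrelation x₀) : x₀ i j = b i j / (κ i i + κ j j) := by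
  obtain ⟨x, rfl, hx, hcorr⟩ := hpres.exists_solution hx₀
  exact eq_div_of_forall_hasDerivAt_of_eventually_abs_le hneg
    (hx.hasDerivAt_apply_of_isDiag hpres.isDiag i j)
    ((eventually_ge_atTop 0).mono fun t ht => (hcorr t ht).abs_apply_le_one i j)

theorem diag_add_diag_nonneg (hij : i ≠ j) : 0 ≤ κ i i + κ j j := by
  by_contra! hneg
  have h0 := hpres.apply_eq_div_of_neg hneg isCorrelation_one
  have h1 := hpres.apply_eq_div_of_neg hneg (isCorrelation_vecMulVec (v := 1) fun _ => abs_one)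
  simp only [one_apply_ne hij, vecMulVec_one, replicateCol_apply, Pi.one_apply] at h0 h1
  linarith

theorem apply_eq_zero_of_add_eq_zero (h0 : κ i i + κ j j = 0) : b i j = 0 := by
  obtain ⟨x, -, hx, hcorr⟩ := hpres.exists_solution isCorrelation_one
  have hf : ∀ t, HasDerivAt (fun s => x s i j) (b i j) t := fun t => by
    simpa [h0] using hx.hasDerivAt_apply_of_isDiag hpres.isDiag i j t
  exact eq_zero_of_forall_hasDerivAt_of_eventually_abs_le hf
    ((eventually_ge_atTop 0).mono fun t ht => (hcorr t ht).abs_apply_le_one i j)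

theorem tendsto_equilibrium {x : ℝ → Matrix (Fin d) (Fin d) ℝ} (hx : IsSolution b κ x)
    (hx0 : x 0 = 1) : Tendsto x atTop (𝓝 (equilibrium b κ)) := by
  have hcorr := hpres x (hx0 ▸ isCorrelation_one) hx
  refine tendsto_pi_nhds.2 fun i => tendsto_pi_nhds.2 fun j => ?_
  rcases eq_or_ne i j with rfl | hij
  · simp only [equilibrium, of_apply]
    exact tendsto_const_nhds.congr'
      ((eventually_ge_atTop 0).mono fun t ht => ((hcorr t ht).2 i).symm)
  simp only [equilibrium, of_apply, if_neg hij]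
  have hf := hx.hasDerivAt_apply_of_isDiag hpres.isDiag i j
  rcases (hpres.diag_add_diag_nonneg hij).eq_or_lt with h0 | hpos
  · have hb := hpres.apply_eq_zero_of_add_eq_zero h0.symm
    have hconst : ∀ t, x t i j = 0 := fun t => by
      simpa [hx0, one_apply_ne hij] using eq_add_mul_of_forall_hasDerivAt (f := fun s => x s i j)
        (β := 0) (fun t => by simpa [← h0, hb] using hf t) t
    rw [hb, zero_div]
    exact tendsto_const_nhds.congr fun t => (hconst t).symm
  · exact tendsto_div_of_forall_hasDerivAt hpos hf

theorem isCorrelation_equilibrium : IsCorrelation (equilibrium b κ) := by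
  obtain ⟨x, hx0, hx, hcorr⟩ := hpres.exists_solution isCorrelation_one
  exact isClosed_setOf_isCorrelation.mem_of_tendsto (hpres.tendsto_equilibrium hx hx0)
    ((eventually_ge_atTop 0).mono hcorr)

theorem eq_mul_equilibrium_add : b = κ * equilibrium b κ + equilibrium b κ * κ := by
  ext i j
  rw [hpres.isDiag.mul_add_mul_apply]
  rcases eq_or_ne i j with rfl | hij
  · have h := hpres.apply_self_eq isCorrelation_one i
    rw [mul_one, one_mul, Matrix.add_apply, transpose_apply] at h
    rw [equilibrium, of_apply, if_pos rfl]
    linarith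
  · simp only [equilibrium, of_apply, if_neg hij]
    exact (mul_div_cancel_of_imp' hpres.apply_eq_zero_of_add_eq_zero).symm

end PreservesCorrelation

end CorrelationODE

open CorrelationODE in
theorem stmt10_general (d : ℕ) (b κ : Matrix (Fin d) (Fin d) ℝ)
    (hpres : ∀ x : ℝ → Matrix (Fin d) (Fin d) ℝ,
      IsCorrelation (x 0) →
      (∀ (t : ℝ) (i j : Fin d), HasDerivAt (fun s => x s i j)
        ((b - (κ * x t + x t * κᵀ)) i j) t) →
      ∀ t ≥ (0 : ℝ), IsCorrelation (x t)) :
    (∀ i j, i ≠ j → κ i j = 0) ∧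
    (∀ i j, i ≠ j → 0 ≤ κ i i + κ j j) ∧
    ∃ c : Matrix (Fin d) (Fin d) ℝ, IsCorrelation c ∧ b = κ * c + c * κ := by
  have hpres : PreservesCorrelation b κ := hpres
  exact ⟨fun _ _ hij => hpres.isDiag hij, fun _ _ => hpres.diag_add_diag_nonneg,
    equilibrium b κ, hpres.isCorrelation_equilibrium, hpres.eq_mul_equilibrium_add⟩

/-- If every solution of the linear ODE `x' = b - (κ x + x κᵀ)` starting from a correlation
matrix stays in the set of correlation matrices, then `κ` is diagonal, `κᵢ + κⱼ ≥ 0` for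
`i ≠ j`, and `b = κ c + c κ` for some correlation matrix `c`. -/
theorem stmt10 (d : ℕ) (b κ : Matrix (Fin d) (Fin d) ℝ) (hb : b.IsSymm)
    (hpres : ∀ x : ℝ → Matrix (Fin d) (Fin d) ℝ,
      IsCorrelation (x 0) →
      (∀ (t : ℝ) (i j : Fin d), HasDerivAt (fun s => x s i j)
        ((b - (κ * x t + x t * κᵀ)) i j) t) →
      ∀ t ≥ (0 : ℝ), IsCorrelation (x t)) :
    (∀ i j, i ≠ j → κ i j = 0) ∧
    (∀ i j, i ≠ j → 0 ≤ κ i i + κ j j) ∧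
    ∃ c : Matrix (Fin d) (Fin d) ℝ, IsCorrelation c ∧ b = κ * c + c * κ :=
  stmt10_general d b κ hpres
end

section
/- Let κ¹, κ² be real diagonal d×d matrices and c¹, c² ∈ C_d(R) correlation matrices such that κ¹c¹ + c¹κ¹ + κ²c² + c²κ² is positive semidefinite. Set κ = κ¹ + κ², and define c by c_{ii} = 1 and, for i ≠ j, c_{ij} = ((κ¹_i+κ¹_j)c¹_{ij} + (κ²_i+κ²_j)c²_{ij})/(κ_i+κ_j) if κ_i+κ_j > 0, and c_{ij} = 0 otherwise. Then κ is positive semidefinite (i.e. has nonnegative diagonal), c is a correlation matrix, and κc + cκ = κ¹c¹ + c¹κ¹ + κ²c² + c²κ². -/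
/-!
Put `A = κ¹c¹ + c¹κ¹ + κ²c² + c²κ²`. Since `c¹, c²` have unit diagonal, `A i i = 2 κ i`, so positive
semidefiniteness of `A` gives `κ ≥ 0`, and every row and column of `A` through an index with
`κ i = 0` vanishes. Off the diagonal `c` is then the Hadamard product of `A` with the Cauchy-type
matrix `((κ i + κ j)⁻¹)`, which is positive semidefinite: with `r a = (1 - a) / (1 + a) ∈ (-1, 1)`,
`(a + b)⁻¹ = 2 / ((1 + a) (1 + b)) * ∑ₘ (r a r b) ^ m`, a convergent sum of rank-one positive
semidefinite matrices. The Schur product theorem finishes the proof.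
-/

open Matrix
open scoped ComplexOrder

namespace Matrix

theorem PosSemidef.nonneg_of_diag_eq_two_mul {n : Type*} {A : Matrix n n ℝ} {k : n → ℝ}
    (hA : A.PosSemidef) (hdiag : ∀ i, A i i = 2 * k i) (i : n) : 0 ≤ k i := by
  linarith [hdiag i ▸ hA.diag_nonneg (i := i)]

variable {n : Type*} [Fintype n]

theorem diagonal_mul_add_mul_diagonal_apply {α : Type*} [CommSemiring α] [DecidableEq n]
    (κ : n → α) (c : Matrix n n α) (i j : n) :
    (diagonal κ * c + c * diagonal κ) i j = (κ i + κ j) * c i j := by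
  rw [add_apply, diagonal_mul, mul_diagonal, add_mul, mul_comm (c i j)]

section RCLike

variable {𝕜 : Type*} [RCLike 𝕜]

theorem PosSemidef.apply_eq_zero_of_diag_eq_zero_right {A : Matrix n n 𝕜}
    (hA : A.PosSemidef) {i : n} (hi : A i i = 0) (j : n) : A j i = 0 := by
  classical
  have hcol : A *ᵥ Pi.single i 1 = 0 :=
    (hA.dotProduct_mulVec_zero_iff _).1 (by simp [hi])
  simpa using congrFun hcol j

theorem PosSemidef.apply_eq_zero_of_diag_eq_zero_left {A : Matrix n n 𝕜}
    (hA : A.PosSemidef) {i : n} (hi : A i i = 0) (j : n) : A i j = 0 := by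
  rw [← hA.1.apply, hA.apply_eq_zero_of_diag_eq_zero_right hi, star_zero]

theorem PosSemidef.of_hasSum {ι : Type*} {f : ι → Matrix n n 𝕜} {M : Matrix n n 𝕜}
    (hf : ∀ m, (f m).PosSemidef) (hM : HasSum f M) : M.PosSemidef := by
  refine posSemidef_iff_dotProduct_mulVec.2 ⟨?_, fun x => ?_⟩
  · have hH := hM.matrix_conjTranspose
    simp only [fun m => (hf m).1.eq] at hH
    exact hH.unique hM
  · let q : Matrix n n 𝕜 →+ 𝕜 :=
      { toFun := fun A => star x ⬝ᵥ A *ᵥ x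
        map_zero' := by simp
        map_add' := fun A B => by simp [add_mulVec, dotProduct_add] }
    have hq : Continuous q :=
      show Continuous fun A : Matrix n n 𝕜 => star x ⬝ᵥ A *ᵥ x by fun_prop
    exact (hM.map q hq).nonneg fun m => (hf m).dotProduct_mulVec_nonneg x

end RCLike

theorem hasSum_inv_add_of_pos {a b : ℝ} (ha : 0 < a) (hb : 0 < b) :
    HasSum (fun m : ℕ => √2 * ((1 - a) / (1 + a)) ^ m / (1 + a) *
      (√2 * ((1 - b) / (1 + b)) ^ m / (1 + b))) (a + b)⁻¹ := by
  have ha' : 0 < 1 + a := by linarith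
  have hb' : 0 < 1 + b := by linarith
  have hr : ∀ {x : ℝ}, 0 < x → |(1 - x) / (1 + x)| < 1 := fun {x} hx => by
    rw [abs_div, abs_of_pos (by linarith : 0 < 1 + x), div_lt_one (by linarith), abs_lt]
    constructor <;> linarith
  have hgeo := (hasSum_geometric_of_abs_lt_one (r := (1 - a) / (1 + a) * ((1 - b) / (1 + b)))
    (by rw [abs_mul]; nlinarith [hr ha, hr hb, abs_nonneg ((1 - a) / (1 + a)),
      abs_nonneg ((1 - b) / (1 + b))])).mul_left (2 / ((1 + a) * (1 + b)))
  have hden : 1 - (1 - a) / (1 + a) * ((1 - b) / (1 + b)) =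
      2 * (a + b) / ((1 + a) * (1 + b)) := by
    field_simp
    ring
  have hsum : (a + b)⁻¹ = 2 / ((1 + a) * (1 + b)) *
      (1 - (1 - a) / (1 + a) * ((1 - b) / (1 + b)))⁻¹ := by
    have : 0 < a + b := by linarith
    rw [hden, inv_div]
    field_simp
  have hterm : ∀ m : ℕ, √2 * ((1 - a) / (1 + a)) ^ m / (1 + a) *
      (√2 * ((1 - b) / (1 + b)) ^ m / (1 + b)) =
      2 / ((1 + a) * (1 + b)) * ((1 - a) / (1 + a) * ((1 - b) / (1 + b))) ^ m := fun m => by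
    rw [div_mul_div_comm, mul_mul_mul_comm, Real.mul_self_sqrt zero_le_two, mul_pow]
    ring
  simpa only [hsum, hterm] using hgeo

theorem posSemidef_inv_add {k : n → ℝ} (hk : ∀ i, 0 < k i) :
    (of fun i j => (k i + k j)⁻¹).PosSemidef := by
  let u : ℕ → n → ℝ := fun m i => √2 * ((1 - k i) / (1 + k i)) ^ m / (1 + k i)
  refine PosSemidef.of_hasSum (fun m => by simpa using posSemidef_vecMulVec_self_star (u m)) ?_
  exact Pi.hasSum.2 fun i => Pi.hasSum.2 fun j => hasSum_inv_add_of_pos (hk i) (hk j)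

section lyapunovCorrelation

variable [DecidableEq n] {A : Matrix n n ℝ} {k : n → ℝ}

noncomputable def lyapunovCorrelation (A : Matrix n n ℝ) (k : n → ℝ) : Matrix n n ℝ :=
  of fun i j => if i = j then 1 else if 0 < k i + k j then A i j / (k i + k j) else 0

theorem diagonal_mul_lyapunovCorrelation_add (hA : A.PosSemidef) (hdiag : ∀ i, A i i = 2 * k i) :
    diagonal k * lyapunovCorrelation A k + lyapunovCorrelation A k * diagonal k = A := by
  ext i j
  rw [diagonal_mul_add_mul_diagonal_apply, lyapunovCorrelation, of_apply]
  rcases eq_or_ne i j with rfl | hij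
  · rw [if_pos rfl, hdiag]
    ring
  rw [if_neg hij]
  split_ifs with hpos
  · field_simp
  · have hki : k i = 0 := by
      linarith [hA.nonneg_of_diag_eq_two_mul hdiag i, hA.nonneg_of_diag_eq_two_mul hdiag j]
    rw [hA.apply_eq_zero_of_diag_eq_zero_left (by rw [hdiag, hki, mul_zero]), mul_zero]

theorem posSemidef_lyapunovCorrelation (hA : A.PosSemidef) (hdiag : ∀ i, A i i = 2 * k i) :
    (lyapunovCorrelation A k).PosSemidef := by
  have hzero : ∀ {i}, k i = 0 → A i i = 0 := fun h => by rw [hdiag, h, mul_zero]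
  have hkpos : ∀ {i}, k i ≠ 0 → 0 < k i := fun h =>
    lt_of_le_of_ne (hA.nonneg_of_diag_eq_two_mul hdiag _) (Ne.symm h)
  -- The rows of `A` vanish where `k` does, so there `k` may be replaced by any positive value.
  let k' : n → ℝ := fun i => if k i = 0 then 1 else k i
  have hk' : ∀ i, 0 < k' i := fun i => by
    by_cases h : k i = 0
    · simp [k', h]
    · simpa [k', h] using hkpos h
  have hdecomp : lyapunovCorrelation A k = A ⊙ (of fun i j => (k' i + k' j)⁻¹) +
      diagonal fun i => if k i = 0 then 1 else 0 := by
    ext i j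
    rcases eq_or_ne i j with rfl | hij
    · by_cases hi : k i = 0
      · simp [lyapunovCorrelation, hi, hzero hi]
      · have hpos := hkpos hi
        simp [lyapunovCorrelation, k', hi, hdiag]
        field_simp
        ring
    · by_cases hij0 : k i = 0 ∨ k j = 0
      · have hAij : A i j = 0 := hij0.elim
          (fun h => hA.apply_eq_zero_of_diag_eq_zero_left (hzero h) j)
          (fun h => hA.apply_eq_zero_of_diag_eq_zero_right (hzero h) i)
        simp [lyapunovCorrelation, hij, hAij]
      · obtain ⟨hi, hj⟩ := not_or.1 hij0
        have hpos : 0 < k i + k j := add_pos (hkpos hi) (hkpos hj)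
        simp [lyapunovCorrelation, k', hij, hi, hj, hpos, div_eq_mul_inv]
  rw [hdecomp]
  exact (hA.hadamard (posSemidef_inv_add hk')).add
    (PosSemidef.diagonal fun i => by dsimp only; split_ifs <;> norm_num)

end lyapunovCorrelation

end Matrix

/-- Combination of two mean-reversion data sets: if
`κ¹c¹ + c¹κ¹ + κ²c² + c²κ²` is PSD, then `κ = κ¹ + κ²` is nonnegative, the weighted average
`c` is a correlation matrix, and `κc + cκ = κ¹c¹ + c¹κ¹ + κ²c² + c²κ²`. -/
theorem stmt11 (d : ℕ) (κ₁ κ₂ : Fin d → ℝ)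
    (c₁ c₂ : Matrix (Fin d) (Fin d) ℝ) (hc₁ : IsCorrelation c₁) (hc₂ : IsCorrelation c₂)
    (hpsd : (Matrix.diagonal κ₁ * c₁ + c₁ * Matrix.diagonal κ₁ +
        (Matrix.diagonal κ₂ * c₂ + c₂ * Matrix.diagonal κ₂)).PosSemidef) :
    ∀ k : Fin d → ℝ, k = (fun i => κ₁ i + κ₂ i) →
    ∀ c : Matrix (Fin d) (Fin d) ℝ,
      c = (Matrix.of fun i j =>
        if i = j then 1 else if 0 < k i + k j then
          ((κ₁ i + κ₁ j) * c₁ i j + (κ₂ i + κ₂ j) * c₂ i j) / (k i + k j)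
        else 0) →
    (∀ i, 0 ≤ k i) ∧ IsCorrelation c ∧
      Matrix.diagonal k * c + c * Matrix.diagonal k =
        Matrix.diagonal κ₁ * c₁ + c₁ * Matrix.diagonal κ₁ +
          (Matrix.diagonal κ₂ * c₂ + c₂ * Matrix.diagonal κ₂) := by
  rintro k rfl c hc
  set A := diagonal κ₁ * c₁ + c₁ * diagonal κ₁ + (diagonal κ₂ * c₂ + c₂ * diagonal κ₂)
  have hA : ∀ i j, A i j = (κ₁ i + κ₁ j) * c₁ i j + (κ₂ i + κ₂ j) * c₂ i j := fun i j => by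
    simp only [A]
    rw [Matrix.add_apply, diagonal_mul_add_mul_diagonal_apply, diagonal_mul_add_mul_diagonal_apply]
  have hdiag : ∀ i, A i i = 2 * (κ₁ i + κ₂ i) := fun i => by
    rw [hA, hc₁.2, hc₂.2]
    ring
  obtain rfl : c = lyapunovCorrelation A (fun i => κ₁ i + κ₂ i) := by
    rw [hc]
    ext i j
    simp only [lyapunovCorrelation, of_apply, hA]
  refine ⟨hpsd.nonneg_of_diag_eq_two_mul hdiag,
    ⟨posSemidef_lyapunovCorrelation hpsd hdiag, fun i => by simp [lyapunovCorrelation]⟩,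
    diagonal_mul_lyapunovCorrelation_add hpsd hdiag⟩
end

section
/- For t ∈ [0, 2/5] and z ∈ [0,1], define m⁺ = z(1−z), m⁻ = t z(1+z)(1 + (t/2)(1 − 6z²)), and p(t,z) = 1 − 1/(1 + t(1+z)(1 + (t/2)(1−6z²))/(1−z)) (with p(t,1)=1). Then the random variable Ẑ taking value z + m⁺ with probability p(t,z) and z − m⁻ with probability 1 − p(t,z) satisfies: (i) z + m⁺ ≤ 1 and z − m⁻ ≥ 0, so Ẑ ∈ [0,1]; (ii) E[Ẑ] = z; (iii) E[Ẑ²] = z² + t z²(1−z²) + (t²/2) z²(1−z²)(1−6z²). -/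
/-!
Write `A = t(1+z)(1 + (t/2)(1-6z²))`, so that `m⁺ = z(1-z)` and `m⁻ = zA`, and `p = A/((1-z)+A)`.
Any two-point law `z + c u` w.p. `p`, `z - c v` w.p. `1-p` with `p u = (1-p) v` has mean `z`
and second moment `z² + c² u v`; here `c = z`, `u = 1-z`, `v = A`, and `z²(1-z)A` is exactly the
prescribed variance. The range condition reduces to `A ≤ 1`.
-/

section TwoPoint

variable {p u v c z : ℝ}

theorem twoPoint_mean_eq (h : p * u = (1 - p) * v) :
    p * (z + c * u) + (1 - p) * (z - c * v) = z := by
  linear_combination c * h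

theorem twoPoint_sq_mean_eq (h : p * u = (1 - p) * v) :
    p * (z + c * u) ^ 2 + (1 - p) * (z - c * v) ^ 2 = z ^ 2 + c ^ 2 * u * v := by
  linear_combination (2 * z * c + c ^ 2 * (u - v)) * h

end TwoPoint

theorem balancingProb_spec {z A p : ℝ} (hz : z ≤ 1) (hA : 0 ≤ A)
    (hp : p = if z = 1 then 1 else 1 - 1 / (1 + A / (1 - z))) :
    (0 ≤ p ∧ p ≤ 1) ∧ p * (1 - z) = (1 - p) * A := by
  split_ifs at hp with hz1
  · subst hp hz1
    norm_num
  · have hd : 0 < 1 - z := sub_pos.mpr (lt_of_le_of_ne hz hz1)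
    have hp' : p = A / ((1 - z) + A) := by
      rw [hp]
      field_simp
      ring
    have hD : 0 < (1 - z) + A := by linarith
    refine ⟨⟨hp' ▸ div_nonneg hA hD.le, ?_⟩, ?_⟩
    · rw [hp', div_le_one hD]
      linarith
    · rw [hp']
      field_simp
      ring

section DownStep

variable {t z : ℝ}

theorem downStep_correction_nonneg (ht0 : 0 ≤ t) (ht1 : t ≤ 2 / 5) (hz0 : 0 ≤ z) (hz1 : z ≤ 1) :
    0 ≤ 1 + t / 2 * (1 - 6 * z ^ 2) := by
  have hz2 : z ^ 2 ≤ 1 := pow_le_one₀ hz0 hz1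
  nlinarith [mul_le_mul_of_nonneg_left hz2 ht0]

theorem downStep_ratio_nonneg (ht0 : 0 ≤ t) (ht1 : t ≤ 2 / 5) (hz0 : 0 ≤ z) (hz1 : z ≤ 1) :
    0 ≤ t * (1 + z) * (1 + t / 2 * (1 - 6 * z ^ 2)) := by
  have := downStep_correction_nonneg ht0 ht1 hz0 hz1
  positivity

theorem downStep_ratio_le_one (ht0 : 0 ≤ t) (ht1 : t ≤ 2 / 5) (hz0 : 0 ≤ z) (hz1 : z ≤ 1) :
    t * (1 + z) * (1 + t / 2 * (1 - 6 * z ^ 2)) ≤ 1 := by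
  have hB0 := downStep_correction_nonneg ht0 ht1 hz0 hz1
  have hB1 : 1 + t / 2 * (1 - 6 * z ^ 2) ≤ 6 / 5 := by nlinarith [mul_nonneg ht0 (sq_nonneg z)]
  nlinarith [mul_nonneg (mul_nonneg ht0 hB0) (sub_nonneg.mpr hz1),
    mul_nonneg (sub_nonneg.mpr ht1) hB0, mul_nonneg ht0 (sub_nonneg.mpr hB1)]

end DownStep

/-- Moment-matching two-point scheme near `z = 1`: with `m⁺ = z(1-z)`,
`m⁻ = t z(1+z)(1 + (t/2)(1-6z²))` and probability `p(t,z)`, the two-point random variable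
taking the values `z + m⁺` and `z - m⁻` with probabilities `p` and `1 - p` stays in `[0,1]`
and matches the first moment `z` and the prescribed second moment. -/
theorem stmt17 (t z : ℝ) (ht : t ∈ Set.Icc (0 : ℝ) (2 / 5)) (hz : z ∈ Set.Icc (0 : ℝ) 1)
    (mp mm p : ℝ)
    (hmp : mp = z * (1 - z))
    (hmm : mm = t * z * (1 + z) * (1 + t / 2 * (1 - 6 * z ^ 2)))
    (hp : p = if z = 1 then 1
      else 1 - 1 / (1 + t * (1 + z) * (1 + t / 2 * (1 - 6 * z ^ 2)) / (1 - z))) :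
    (0 ≤ p ∧ p ≤ 1) ∧
    (z + mp ≤ 1 ∧ 0 ≤ z - mm) ∧
    (p * (z + mp) + (1 - p) * (z - mm) = z) ∧
    (p * (z + mp) ^ 2 + (1 - p) * (z - mm) ^ 2
      = z ^ 2 + t * z ^ 2 * (1 - z ^ 2) + t ^ 2 / 2 * z ^ 2 * (1 - z ^ 2) * (1 - 6 * z ^ 2)) := by
  obtain ⟨ht0, ht1⟩ := ht
  obtain ⟨hz0, hz1⟩ := hz
  set A := t * (1 + z) * (1 + t / 2 * (1 - 6 * z ^ 2)) with hA
  have hA0 : 0 ≤ A := downStep_ratio_nonneg ht0 ht1 hz0 hz1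
  have hA1 : A ≤ 1 := downStep_ratio_le_one ht0 ht1 hz0 hz1
  obtain ⟨hp01, hbal⟩ := balancingProb_spec hz1 hA0 hp
  have hmm' : mm = z * A := by rw [hmm, hA]; ring
  subst hmp
  rw [hmm']
  refine ⟨hp01, ⟨by nlinarith, by nlinarith [mul_nonneg hz0 (sub_nonneg.mpr hA1)]⟩,
    twoPoint_mean_eq hbal, ?_⟩
  rw [twoPoint_sq_mean_eq hbal, hA]
  ring
end
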